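/- arXiv:2512.18233 — 2 statements merged into one kernel-verified Lean document; each statement's English description precedes it below -/
import Mathlib

section
/- (Second derivative test) Let a < b be real numbers and let F : [a, b] → ℝ be a twice differentiable function such that |F″(x)| ≥ m > 0 for all x ∈ [a, b]. Then |∫_{a}^{b} e^{iF(x)} dx| ≤ 8/√m. -/
/-!
By Darboux's theorem `F''` has constant sign, and replacing `F` by `-F` (which conjugates the
integral) we may assume `F'' ≥ m`, so that `F'` increases at rate at least `m`. Put `δ = √m`.
Where `|F'| < δ` we are on an interval of length at most `2δ / m = 2 / δ`, and bound the integral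
by that length. On each of the (at most two) remaining intervals `F'` is monotone with `|F'| ≥ δ`,
and integrating by parts against `1 / F'` (the first derivative test) bounds the integral by
`2 / δ`. Altogether the integral is at most `6 / √m`.
-/

open MeasureTheory intervalIntegral Set

section

variable {E : Type*} [NormedAddCommGroup E] [NormedSpace ℝ E]

theorem norm_integral_le_add_of_crossing {f : ℝ → E} {g : ℝ → ℝ} {a b t A B : ℝ} (hab : a ≤ b)
    (hf : IntervalIntegrable f volume a b) (hg : ContinuousOn g (Icc a b))
    (hA₀ : 0 ≤ A) (hB₀ : 0 ≤ B)
    (hA : ∀ c ∈ Icc a b, g c ≤ t → ‖∫ x in a..c, f x‖ ≤ A)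
    (hB : ∀ c ∈ Icc a b, t ≤ g c → ‖∫ x in c..b, f x‖ ≤ B) :
    ‖∫ x in a..b, f x‖ ≤ A + B := by
  rcases le_total (g b) t with hb | hb
  · linarith [hA b (right_mem_Icc.2 hab) hb]
  rcases le_total t (g a) with ha | ha
  · linarith [hB a (left_mem_Icc.2 hab) ha]
  obtain ⟨c, hc, rfl⟩ := intermediate_value_Icc hab hg ⟨ha, hb⟩
  have hac : uIcc a c ⊆ uIcc a b := uIcc_subset_uIcc_left (Icc_subset_uIcc hc)
  have hcb : uIcc c b ⊆ uIcc a b := uIcc_subset_uIcc_right (Icc_subset_uIcc hc)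
  rw [← integral_add_adjacent_intervals (hf.mono_set hac) (hf.mono_set hcb)]
  exact (norm_add_le _ _).trans (add_le_add (hA c hc le_rfl) (hB c hc le_rfl))

theorem norm_integral_smul_deriv_le_of_deriv_nonpos [CompleteSpace E] {a b C : ℝ}
    {u u' : ℝ → ℝ} {v v' : ℝ → E} (hab : a ≤ b)
    (hu : ∀ x ∈ Icc a b, HasDerivWithinAt u (u' x) (Icc a b) x)
    (hu' : ∀ x ∈ Icc a b, u' x ≤ 0) (hv : ∀ x ∈ Icc a b, HasDerivWithinAt v (v' x) (Icc a b) x)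
    (hv' : IntervalIntegrable v' volume a b) (hC : ∀ x ∈ Icc a b, ‖v x‖ ≤ C) :
    ‖∫ x in a..b, u x • v' x‖ ≤ C * (|u a| + |u b| + (u a - u b)) := by
  have hu_at : ∀ x ∈ Ioo a b, HasDerivAt u (u' x) x := fun x hx =>
    (hu x (Ioo_subset_Icc_self hx)).hasDerivAt (Icc_mem_nhds hx.1 hx.2)
  have hu_cont : ContinuousOn u (Icc a b) := fun x hx => (hu x hx).continuousWithinAt
  have hu'_int : IntervalIntegrable u' volume a b := by
    have h := intervalIntegrable_deriv_of_nonneg (g := -u) (g' := -u')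
      (by rw [uIcc_of_le hab]; exact hu_cont.neg)
      (by rw [min_eq_left hab, max_eq_right hab]; exact fun x hx => (hu_at x hx).neg)
      (by rw [min_eq_left hab, max_eq_right hab]
          exact fun x hx => neg_nonneg.2 (hu' x (Ioo_subset_Icc_self hx)))
    simpa only [neg_neg] using h.neg
  have hvar : ∫ x in a..b, -u' x = u a - u b := by
    rw [intervalIntegral.integral_neg,
      integral_eq_sub_of_hasDerivAt_of_le hab hu_cont hu_at hu'_int, neg_sub]
  have hC₀ : 0 ≤ C := (norm_nonneg _).trans (hC a (left_mem_Icc.2 hab))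
  have hrest : ‖∫ x in a..b, u' x • v x‖ ≤ C * (u a - u b) := by
    rw [← hvar, ← intervalIntegral.integral_const_mul]
    refine norm_integral_le_of_norm_le hab (ae_of_all _ fun x hx => ?_) (hu'_int.neg.const_mul C)
    have hx' := Ioc_subset_Icc_self hx
    rw [norm_smul, Real.norm_eq_abs, abs_of_nonpos (hu' x hx'), mul_comm]
    exact mul_le_mul_of_nonneg_right (hC x hx') (neg_nonneg.2 (hu' x hx'))
  rw [integral_smul_deriv_eq_deriv_smul_of_hasDerivWithinAt (by rwa [uIcc_of_le hab])
    (by rwa [uIcc_of_le hab]) hu'_int hv']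
  calc ‖u b • v b - u a • v a - ∫ x in a..b, u' x • v x‖
      ≤ ‖u b • v b‖ + ‖u a • v a‖ + ‖∫ x in a..b, u' x • v x‖ :=
        (norm_sub_le _ _).trans (add_le_add_left (norm_sub_le _ _) _)
    _ ≤ |u b| * C + |u a| * C + C * (u a - u b) := by
      rw [norm_smul, norm_smul, Real.norm_eq_abs, Real.norm_eq_abs]
      gcongr
      exacts [hC b (right_mem_Icc.2 hab), hC a (left_mem_Icc.2 hab)]
    _ = C * (|u a| + |u b| + (u a - u b)) := by ring

end

theorem mul_pos_of_continuousOn_of_ne_zero {g : ℝ → ℝ} {a b : ℝ} (hab : a ≤ b)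
    (hg : ContinuousOn g (Icc a b)) (h0 : ∀ x ∈ Icc a b, g x ≠ 0) : 0 < g a * g b := by
  by_contra! h
  have h0mem : (0 : ℝ) ∈ uIcc (g a) (g b) := by
    rcases mul_nonpos_iff.1 h with ⟨ha, hb⟩ | ⟨ha, hb⟩
    exacts [Icc_subset_uIcc' ⟨hb, ha⟩, Icc_subset_uIcc ⟨ha, hb⟩]
  obtain ⟨c, hc, hc0⟩ := intermediate_value_uIcc (by rwa [uIcc_of_le hab]) h0mem
  exact h0 c (by rwa [uIcc_of_le hab] at hc) hc0

theorem mul_sub_le_image_sub_of_le_hasDerivWithinAt_Icc {f f' : ℝ → ℝ} {a b C : ℝ}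
    (hf : ∀ x ∈ Icc a b, HasDerivWithinAt f (f' x) (Icc a b) x) (hC : ∀ x ∈ Icc a b, C ≤ f' x)
    ⦃x y : ℝ⦄ (hx : x ∈ Icc a b) (hy : y ∈ Icc a b) (hxy : x ≤ y) : C * (y - x) ≤ f y - f x := by
  have hf_at : ∀ z ∈ interior (Icc a b), HasDerivAt f (f' z) z := fun z hz => by
    rw [interior_Icc] at hz
    exact (hf z (Ioo_subset_Icc_self hz)).hasDerivAt (Icc_mem_nhds hz.1 hz.2)
  refine (convex_Icc a b).mul_sub_le_image_sub_of_le_deriv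
    (fun z hz => (hf z hz).continuousWithinAt)
    (fun z hz => (hf_at z hz).differentiableAt.differentiableWithinAt)
    (fun z hz => ?_) x hx y hy hxy
  rw [(hf_at z hz).deriv]
  exact hC z (interior_subset hz)

theorem monotoneOn_of_hasDerivWithinAt_Icc_nonneg {f f' : ℝ → ℝ} {a b : ℝ}
    (hf : ∀ x ∈ Icc a b, HasDerivWithinAt f (f' x) (Icc a b) x) (hf' : ∀ x ∈ Icc a b, 0 ≤ f' x) :
    MonotoneOn f (Icc a b) := fun x hx y hy hxy => by
  simpa using mul_sub_le_image_sub_of_le_hasDerivWithinAt_Icc hf hf' hx hy hxy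

theorem norm_integral_exp_I_mul_neg (F : ℝ → ℝ) (a b : ℝ) :
    ‖∫ x in a..b, Complex.exp (Complex.I * ((-F x : ℝ) : ℂ))‖ =
      ‖∫ x in a..b, Complex.exp (Complex.I * (F x : ℂ))‖ := by
  have hconj : ∀ x, Complex.exp (Complex.I * ((-F x : ℝ) : ℂ)) =
      (starRingEnd ℂ) (Complex.exp (Complex.I * (F x : ℂ))) := fun x => by
    rw [← Complex.exp_conj]
    simp
  simp_rw [hconj, intervalIntegral_conj, Complex.norm_conj]

section

variable {a b : ℝ} {F F' F'' : ℝ → ℝ}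

theorem intervalIntegrable_exp_I_mul (hab : a ≤ b) (hF : ContinuousOn F (Icc a b)) :
    IntervalIntegrable (fun x => Complex.exp (Complex.I * (F x : ℂ))) volume a b := by
  apply ContinuousOn.intervalIntegrable
  rw [uIcc_of_le hab]
  fun_prop

theorem norm_integral_exp_I_mul_le_of_le_abs_deriv {lam : ℝ} (hab : a ≤ b)
    (hF' : ∀ x ∈ Icc a b, HasDerivWithinAt F (F' x) (Icc a b) x)
    (hF'' : ∀ x ∈ Icc a b, HasDerivWithinAt F' (F'' x) (Icc a b) x)
    (hF''₀ : ∀ x ∈ Icc a b, 0 ≤ F'' x) (hlam : 0 < lam) (hF'lam : ∀ x ∈ Icc a b, lam ≤ |F' x|) :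
    ‖∫ x in a..b, Complex.exp (Complex.I * (F x : ℂ))‖ ≤ 2 / lam := by
  have hne : ∀ x ∈ Icc a b, F' x ≠ 0 := fun x hx => abs_pos.1 (hlam.trans_le (hF'lam x hx))
  have hF'c : ContinuousOn F' (Icc a b) := fun x hx => (hF'' x hx).continuousWithinAt
  have hu : ∀ x ∈ Icc a b, HasDerivWithinAt (fun y => (F' y)⁻¹) (-F'' x / F' x ^ 2) (Icc a b) x :=
    fun x hx => (hF'' x hx).inv (hne x hx)
  have hu' : ∀ x ∈ Icc a b, -F'' x / F' x ^ 2 ≤ 0 := fun x hx =>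
    div_nonpos_of_nonpos_of_nonneg (neg_nonpos.2 (hF''₀ x hx)) (sq_nonneg _)
  have hv : ∀ x ∈ Icc a b, HasDerivWithinAt (fun y => Complex.exp (Complex.I * (F y : ℂ)))
      (Complex.exp (Complex.I * (F x : ℂ)) * (Complex.I * (F' x : ℂ))) (Icc a b) x :=
    fun x hx => ((hF' x hx).ofReal_comp.const_mul Complex.I).cexp
  have hv' : IntervalIntegrable
      (fun x => Complex.exp (Complex.I * (F x : ℂ)) * (Complex.I * (F' x : ℂ))) volume a b := by
    have hFc : ContinuousOn F (Icc a b) := fun x hx => (hF' x hx).continuousWithinAt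
    apply ContinuousOn.intervalIntegrable
    rw [uIcc_of_le hab]
    fun_prop
  have hibp : ∫ x in a..b,
      (F' x)⁻¹ • (Complex.exp (Complex.I * (F x : ℂ)) * (Complex.I * (F' x : ℂ)))
      = Complex.I * ∫ x in a..b, Complex.exp (Complex.I * (F x : ℂ)) := by
    rw [← intervalIntegral.integral_const_mul]
    refine integral_congr fun x hx => ?_
    rw [uIcc_of_le hab] at hx
    have : (F' x : ℂ) ≠ 0 := Complex.ofReal_ne_zero.2 (hne x hx)
    simp only [Complex.real_smul, Complex.ofReal_inv]
    field_simp
  have key := norm_integral_smul_deriv_le_of_deriv_nonpos hab hu hu' hv hv' (C := 1)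
    (fun x _ => (Complex.norm_exp_I_mul_ofReal _).le)
  rw [hibp, norm_mul, Complex.norm_I, one_mul, one_mul] at key
  refine key.trans ?_
  have hinv : ∀ x ∈ Icc a b, |(F' x)⁻¹| ≤ lam⁻¹ := fun x hx => by
    rw [abs_inv]
    exact inv_anti₀ hlam (hF'lam x hx)
  have ha := abs_le.1 (hinv a (left_mem_Icc.2 hab))
  have hb := abs_le.1 (hinv b (right_mem_Icc.2 hab))
  -- `1 / F'` has one sign on `[a, b]`, so boundary terms plus variation add up to
  -- `2 * max |1 / F' a| |1 / F' b|`.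
  have hsign : 0 < (F' a)⁻¹ * (F' b)⁻¹ := by
    rw [← mul_inv]
    exact inv_pos.2 (mul_pos_of_continuousOn_of_ne_zero hab hF'c hne)
  rw [div_eq_mul_inv]
  rcases pos_and_pos_or_neg_and_neg_of_mul_pos hsign with ⟨ha0, hb0⟩ | ⟨ha0, hb0⟩
  · rw [abs_of_pos ha0, abs_of_pos hb0]
    linarith
  · rw [abs_of_neg ha0, abs_of_neg hb0]
    linarith

theorem norm_integral_exp_I_mul_le_four_div_sqrt {m : ℝ} (hab : a ≤ b)
    (hF' : ∀ x ∈ Icc a b, HasDerivWithinAt F (F' x) (Icc a b) x)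
    (hF'' : ∀ x ∈ Icc a b, HasDerivWithinAt F' (F'' x) (Icc a b) x)
    (hm : 0 < m) (hF''m : ∀ x ∈ Icc a b, m ≤ F'' x) (ha : -√m ≤ F' a) :
    ‖∫ x in a..b, Complex.exp (Complex.I * (F x : ℂ))‖ ≤ 4 / √m := by
  have hδ : 0 < √m := Real.sqrt_pos.2 hm
  have hgrowth := mul_sub_le_image_sub_of_le_hasDerivWithinAt_Icc hF'' hF''m
  have hmono : MonotoneOn F' (Icc a b) :=
    monotoneOn_of_hasDerivWithinAt_Icc_nonneg hF'' fun x hx => hm.le.trans (hF''m x hx)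
  calc ‖∫ x in a..b, Complex.exp (Complex.I * (F x : ℂ))‖ ≤ 2 / √m + 2 / √m :=
        norm_integral_le_add_of_crossing hab
          (intervalIntegrable_exp_I_mul hab fun x hx => (hF' x hx).continuousWithinAt)
          (fun x hx => (hF'' x hx).continuousWithinAt) (t := √m) (by positivity) (by positivity)
          ?_ ?_
    _ = 4 / √m := by ring
  · intro c hc hc_le
    have hlen : m * (c - a) ≤ 2 * √m := by
      linarith [hgrowth (left_mem_Icc.2 hab) hc hc.1]
    calc ‖∫ x in a..c, Complex.exp (Complex.I * (F x : ℂ))‖ ≤ 1 * |c - a| :=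
          norm_integral_le_of_norm_le_const fun x _ => (Complex.norm_exp_I_mul_ofReal _).le
      _ ≤ 2 / √m := by
        rw [one_mul, abs_of_nonneg (sub_nonneg.2 hc.1), le_div_iff₀ hδ]
        nlinarith [Real.mul_self_sqrt hm.le]
  · intro c hc hc_ge
    have hsub : Icc c b ⊆ Icc a b := Icc_subset_Icc_left hc.1
    exact norm_integral_exp_I_mul_le_of_le_abs_deriv hc.2
      (fun x hx => (hF' x (hsub hx)).mono hsub) (fun x hx => (hF'' x (hsub hx)).mono hsub)
      (fun x hx => hm.le.trans (hF''m x (hsub hx))) hδ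
      (fun x hx => (hc_ge.trans (hmono hc (hsub hx) hx.1)).trans (le_abs_self _))

theorem norm_integral_exp_I_mul_le_six_div_sqrt {m : ℝ} (hab : a ≤ b)
    (hF' : ∀ x ∈ Icc a b, HasDerivWithinAt F (F' x) (Icc a b) x)
    (hF'' : ∀ x ∈ Icc a b, HasDerivWithinAt F' (F'' x) (Icc a b) x)
    (hm : 0 < m) (hF''m : ∀ x ∈ Icc a b, m ≤ F'' x) :
    ‖∫ x in a..b, Complex.exp (Complex.I * (F x : ℂ))‖ ≤ 6 / √m := by
  have hδ : 0 < √m := Real.sqrt_pos.2 hm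
  have hmono : MonotoneOn F' (Icc a b) :=
    monotoneOn_of_hasDerivWithinAt_Icc_nonneg hF'' fun x hx => hm.le.trans (hF''m x hx)
  calc ‖∫ x in a..b, Complex.exp (Complex.I * (F x : ℂ))‖ ≤ 2 / √m + 4 / √m :=
        norm_integral_le_add_of_crossing hab
          (intervalIntegrable_exp_I_mul hab fun x hx => (hF' x hx).continuousWithinAt)
          (fun x hx => (hF'' x hx).continuousWithinAt) (t := -√m) (by positivity) (by positivity)
          ?_ ?_
    _ = 6 / √m := by ring
  · intro c hc hc_le
    have hsub : Icc a c ⊆ Icc a b := Icc_subset_Icc_right hc.2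
    exact norm_integral_exp_I_mul_le_of_le_abs_deriv hc.1
      (fun x hx => (hF' x (hsub hx)).mono hsub) (fun x hx => (hF'' x (hsub hx)).mono hsub)
      (fun x hx => hm.le.trans (hF''m x (hsub hx))) hδ
      (fun x hx => le_abs.2 (Or.inr (by linarith [hmono (hsub hx) hc hx.2])))
  · intro c hc hc_ge
    have hsub : Icc c b ⊆ Icc a b := Icc_subset_Icc_left hc.1
    exact norm_integral_exp_I_mul_le_four_div_sqrt hc.2
      (fun x hx => (hF' x (hsub hx)).mono hsub) (fun x hx => (hF'' x (hsub hx)).mono hsub) hm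
      (fun x hx => hF''m x (hsub hx)) hc_ge

end

/-- (Second derivative test) If `F : [a,b] → ℝ` is twice differentiable with
`|F″(x)| ≥ m > 0` on `[a,b]`, then `|∫_a^b e^{iF(x)} dx| ≤ 8/√m`. -/
theorem stmt_9 (a b m : ℝ) (hab : a < b) (F F' F'' : ℝ → ℝ)
    (hF' : ∀ x ∈ Set.Icc a b, HasDerivWithinAt F (F' x) (Set.Icc a b) x)
    (hF'' : ∀ x ∈ Set.Icc a b, HasDerivWithinAt F' (F'' x) (Set.Icc a b) x)
    (hm : 0 < m) (hbound : ∀ x ∈ Set.Icc a b, m ≤ |F'' x|) :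
    ‖∫ x in a..b, Complex.exp (Complex.I * (F x : ℂ))‖ ≤ 8 / Real.sqrt m := by
  have hsix : 6 / √m ≤ 8 / √m := by gcongr; norm_num
  have hF''ne : ∀ x ∈ Icc a b, F'' x ≠ 0 := fun x hx => abs_pos.1 (hm.trans_le (hbound x hx))
  rcases hasDerivWithinAt_forall_lt_or_forall_gt_of_forall_ne (convex_Icc a b) hF'' hF''ne
    with hneg | hpos
  · rw [← norm_integral_exp_I_mul_neg]
    refine (norm_integral_exp_I_mul_le_six_div_sqrt hab.le (fun x hx => (hF' x hx).neg)
      (fun x hx => (hF'' x hx).neg) hm fun x hx => ?_).trans hsix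
    simpa only [abs_of_neg (hneg x hx)] using hbound x hx
  · refine (norm_integral_exp_I_mul_le_six_div_sqrt hab.le hF' hF'' hm fun x hx => ?_).trans hsix
    simpa only [abs_of_pos (hpos x hx)] using hbound x hx
end

section
/- Let k ≥ 1, let d₁, …, d_k and N be positive integers with N ≥ 2, and let c₁, …, c_k be positive integers. Then ∑_{d₁ ≤ N^{α₁}+c₁} ⋯ ∑_{d_k ≤ N^{α_k}+c_k} (log d₁)(log d₂)⋯(log d_k) / (min(d₁, …, d_k))^{1/4} ≪ N^{(∑_{i=1}^k α_i) − δ/4} (log N)^k, for any real numbers 0 < δ = α₁ < α₂ < ⋯ < α_k < 1, where the sums run over positive integers d_i and the implied constant depends only on k and the c_i. -/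
open Filter Finset

/-!
Since `(min dᵢ) ^ (-1/4) ≤ ∑ᵢ dᵢ ^ (-1/4)`, the sum is at most `k` box sums whose summands
factorise over the coordinates. With `Mⱼ = ⌊N ^ αⱼ + cⱼ⌋ ≍ N ^ αⱼ`, each factor is at most
`Mⱼ log Mⱼ`, except the distinguished one, which is at most
`log Mᵢ · ∑_{x ≤ Mᵢ} x ^ (-1/4) ≤ (4/3) log Mᵢ · Mᵢ ^ (3/4)`.
The saving `Mᵢ ^ (-1/4) ≤ N ^ (-δ/4)` comes from `αᵢ ≥ α₁ = δ`.
-/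

-- Bernoulli's inequality `(1 - 1/x) ^ p ≤ 1 - p/x`, multiplied by `x ^ p`.
lemma Real.rpow_sub_one_mul_le_rpow_sub_rpow {p x : ℝ} (hp0 : 0 ≤ p) (hp1 : p ≤ 1)
    (hx : 1 ≤ x) : p * x ^ (p - 1) ≤ x ^ p - (x - 1) ^ p := by
  have hx0 : 0 < x := by linarith
  have hinv : 0 ≤ 1 + -x⁻¹ := by linarith [inv_le_one_of_one_le₀ hx]
  calc p * x ^ (p - 1) = x ^ p - x ^ p * (1 + p * -x⁻¹) := by
        rw [Real.rpow_sub_one hx0.ne']; ring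
    _ ≤ x ^ p - x ^ p * (1 + -x⁻¹) ^ p := by
        gcongr
        exact rpow_one_add_le_one_add_mul_self (by linarith) hp0 hp1
    _ = x ^ p - (x - 1) ^ p := by
        rw [← Real.mul_rpow hx0.le hinv, mul_add, mul_one, mul_neg, mul_inv_cancel₀ hx0.ne',
          ← sub_eq_add_neg]

lemma sum_Icc_rpow_neg_le {s : ℝ} (hs0 : 0 ≤ s) (hs1 : s < 1) (M : ℕ) :
    ∑ x ∈ Icc 1 M, (x : ℝ) ^ (-s) ≤ (M : ℝ) ^ (1 - s) / (1 - s) := by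
  rw [le_div_iff₀ (by linarith)]
  induction M with
  | zero => simp [Real.zero_rpow (by linarith : 1 - s ≠ 0)]
  | succ n ih =>
    have step := Real.rpow_sub_one_mul_le_rpow_sub_rpow (p := 1 - s) (x := n + 1)
      (by linarith) (by linarith) (by simp)
    rw [sum_Icc_succ_top (by omega), add_mul]
    simp only [add_sub_cancel_right, sub_sub_cancel_left] at step
    push_cast
    linarith

lemma sum_Icc_log_div_rpow_le {s : ℝ} (hs0 : 0 ≤ s) (hs1 : s < 1) (M : ℕ) :
    ∑ x ∈ Icc 1 M, Real.log x / (x : ℝ) ^ s ≤ M * Real.log M / ((1 - s) * (M : ℝ) ^ s) := by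
  rcases M.eq_zero_or_pos with rfl | hM
  · simp
  have hM' : (0 : ℝ) < M := by exact_mod_cast hM
  calc ∑ x ∈ Icc 1 M, Real.log x / (x : ℝ) ^ s
      ≤ ∑ x ∈ Icc 1 M, Real.log M * (x : ℝ) ^ (-s) := by
        gcongr with x hx
        obtain ⟨hx1, hxM⟩ := mem_Icc.mp hx
        rw [div_eq_mul_inv, ← Real.rpow_neg (Nat.cast_nonneg x)]
        gcongr
    _ = Real.log M * ∑ x ∈ Icc 1 M, (x : ℝ) ^ (-s) := (mul_sum _ _ _).symm
    _ ≤ Real.log M * ((M : ℝ) ^ (1 - s) / (1 - s)) := by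
        gcongr
        exact sum_Icc_rpow_neg_le hs0 hs1 M
    _ = M * Real.log M / ((1 - s) * (M : ℝ) ^ s) := by
        rw [Real.rpow_sub hM', Real.rpow_one]
        field_simp

lemma Finset.apply_inf'_le_sum {ι α R : Type*} [LinearOrder α] [AddCommMonoid R] [PartialOrder R]
    [IsOrderedAddMonoid R] {s : Finset ι} (H : s.Nonempty) (f : ι → α) {φ : α → R}
    (hφ : ∀ a, 0 ≤ φ a) : φ (s.inf' H f) ≤ ∑ i ∈ s, φ (f i) := by
  obtain ⟨i, hi, hinf⟩ := exists_mem_eq_inf' H f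
  rw [hinf]
  exact single_le_sum (fun j _ => hφ (f j)) hi

lemma sum_Icc_prod_log_div_rpow_le {ι : Type*} [Fintype ι] [DecidableEq ι] (M : ι → ℕ) (i : ι)
    {s : ℝ} (hs0 : 0 ≤ s) (hs1 : s < 1) :
    ∑ d ∈ Icc 1 M, (∏ j, Real.log (d j)) / (d i : ℝ) ^ s
      ≤ (∏ j, M j * Real.log (M j)) / ((1 - s) * (M i : ℝ) ^ s) := by
  -- Exponent `s` on coordinate `i` and `0` elsewhere, so that the summand factorises.
  set t : ι → ℝ := Pi.single i s
  have hdiv (x : ι → ℕ) : ∏ j, (x j : ℝ) ^ t j = (x i : ℝ) ^ s := by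
    rw [prod_eq_single i (fun j _ hj => by simp [t, hj]) (by simp)]
    simp [t]
  have hden : ∏ j, (1 - t j) * (M j : ℝ) ^ t j = (1 - s) * (M i : ℝ) ^ s := by
    rw [prod_mul_distrib, hdiv, prod_eq_single i (fun j _ hj => by simp [t, hj]) (by simp)]
    simp [t]
  calc ∑ d ∈ Icc 1 M, (∏ j, Real.log (d j)) / (d i : ℝ) ^ s
      = ∏ j, ∑ x ∈ Icc 1 (M j), Real.log x / (x : ℝ) ^ t j := by
        rw [prod_univ_sum, Pi.Icc_eq]
        refine sum_congr rfl fun d _ => ?_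
        rw [prod_div_distrib, hdiv]
    _ ≤ ∏ j, M j * Real.log (M j) / ((1 - t j) * (M j : ℝ) ^ t j) := by
        have ht0 (j : ι) : 0 ≤ t j := by simp only [t, Pi.single_apply]; split <;> linarith
        have ht1 (j : ι) : t j < 1 := by simp only [t, Pi.single_apply]; split <;> linarith
        refine prod_le_prod (fun j _ => sum_nonneg fun x _ => ?_)
          fun j _ => sum_Icc_log_div_rpow_le (ht0 j) (ht1 j) (M j)
        exact div_nonneg (Real.log_natCast_nonneg x) (by positivity)
    _ = (∏ j, M j * Real.log (M j)) / ((1 - s) * (M i : ℝ) ^ s) := by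
        rw [prod_div_distrib, hden]

lemma one_le_log_of_three_le {N : ℕ} (hN : 3 ≤ N) : 1 ≤ Real.log N := by
  rw [Real.le_log_iff_exp_le (by positivity)]
  exact Real.exp_one_lt_three.le.trans (by exact_mod_cast hN)

lemma floor_rpow_add_mul_log_le {N : ℕ} (hN : 3 ≤ N) {α : ℝ} (hα0 : 0 ≤ α) (hα1 : α ≤ 1)
    (c : ℕ) : (⌊(N : ℝ) ^ α + c⌋₊ : ℝ) * Real.log ⌊(N : ℝ) ^ α + c⌋₊
      ≤ (1 + c) ^ 2 * (N : ℝ) ^ α * Real.log N := by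
  set M := ⌊(N : ℝ) ^ α + c⌋₊
  have hNα : (1 : ℝ) ≤ (N : ℝ) ^ α :=
    Real.one_le_rpow (by exact_mod_cast (by omega : 1 ≤ N)) hα0
  have hc : (0 : ℝ) ≤ c := c.cast_nonneg
  have hlogN := one_le_log_of_three_le hN
  have hM0 : (0 : ℝ) < M := by
    exact_mod_cast Nat.floor_pos.mpr (by linarith)
  have hM : (M : ℝ) ≤ (1 + c) * (N : ℝ) ^ α :=
    (Nat.floor_le (by positivity)).trans (by nlinarith)
  have hlogM : Real.log M ≤ (1 + c) * Real.log N :=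
    calc Real.log M ≤ Real.log ((1 + c) * (N : ℝ) ^ α) := Real.log_le_log hM0 hM
      _ = Real.log (1 + c) + α * Real.log N := by
        rw [Real.log_mul (by positivity) (by positivity), Real.log_rpow (by positivity)]
      _ ≤ c + 1 * Real.log N := by
        gcongr
        linarith [Real.log_le_sub_one_of_pos (by positivity : (0 : ℝ) < 1 + c)]
      _ ≤ (1 + c) * Real.log N := by nlinarith
  calc (M : ℝ) * Real.log M ≤ ((1 + c) * (N : ℝ) ^ α) * ((1 + c) * Real.log N) :=
        mul_le_mul hM hlogM (Real.log_natCast_nonneg M) (by positivity)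
    _ = (1 + c) ^ 2 * (N : ℝ) ^ α * Real.log N := by ring

/-- For positive integers `c₁, …, c_k` and reals `0 < δ = α₁ < ⋯ < α_k < 1`:
`∑_{d₁ ≤ N^{α₁}+c₁} ⋯ ∑_{d_k ≤ N^{α_k}+c_k} (log d₁)⋯(log d_k)/(min dᵢ)^{1/4}
  ≪ N^{∑αᵢ − δ/4} (log N)^k`
for all sufficiently large `N`, where the sums run over positive integers `dᵢ`
and the implied constant depends only on `k` and the `cᵢ`. -/
theorem stmt_17 (k : ℕ) (hk : 0 < k) (c : Fin k → ℕ) (hc : ∀ i, 0 < c i) :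
    ∃ C : ℝ, ∀ α : Fin k → ℝ, StrictMono α → 0 < α ⟨0, hk⟩ → α ⟨k - 1, by omega⟩ < 1 →
      ∀ᶠ N : ℕ in atTop,
        ∑ d ∈ Finset.Icc (fun _ : Fin k => 1) fun i => ⌊(N : ℝ) ^ (α i) + c i⌋₊,
            (∏ i, Real.log (d i)) /
              ((Finset.univ.inf' ⟨⟨0, hk⟩, Finset.mem_univ _⟩ d : ℕ) : ℝ) ^ ((1 : ℝ) / 4)
          ≤ C * (N : ℝ) ^ ((∑ i, α i) - α ⟨0, hk⟩ / 4) * Real.log N ^ k := by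
  refine ⟨k * (4 / 3 * ∏ i, (1 + (c i : ℝ)) ^ 2), fun α hα hα0 hα1 => ?_⟩
  filter_upwards [eventually_ge_atTop 3] with N hN
  set δ := α ⟨0, hk⟩
  set M : Fin k → ℕ := fun i => ⌊(N : ℝ) ^ (α i) + c i⌋₊
  have hNpos : (0 : ℝ) < N := by exact_mod_cast (by omega : 0 < N)
  have hδ_le (i : Fin k) : δ ≤ α i := hα.monotone (Fin.le_def.mpr (Nat.zero_le _))
  have hα_le_one (i : Fin k) : α i ≤ 1 :=
    (hα.monotone (Fin.le_def.mpr (by omega : i.val ≤ k - 1))).trans hα1.le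
  -- `c i ≥ 1` makes the floor exceed `N ^ α i`, so the smallest side of the box is `≫ N ^ δ`.
  have hM_ge (i : Fin k) : (N : ℝ) ^ (δ / 4) ≤ (M i : ℝ) ^ ((1 : ℝ) / 4) := by
    have hNα : (N : ℝ) ^ α i < M i := by
      have : (1 : ℝ) ≤ c i := by exact_mod_cast hc i
      linarith [Nat.sub_one_lt_floor ((N : ℝ) ^ α i + c i)]
    rw [div_eq_mul_one_div δ, Real.rpow_mul hNpos.le]
    gcongr
    exact (Real.rpow_le_rpow_of_exponent_le (by exact_mod_cast (by omega : 1 ≤ N)) (hδ_le i)).trans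
      hNα.le
  have hbox (i : Fin k) : ∑ d ∈ Icc 1 M, (∏ j, Real.log (d j)) / (d i : ℝ) ^ ((1 : ℝ) / 4)
      ≤ 4 / 3 * (∏ j, (1 + (c j : ℝ)) ^ 2) * (N : ℝ) ^ ((∑ j, α j) - δ / 4) * Real.log N ^ k :=
    calc _ ≤ (∏ j, M j * Real.log (M j)) / ((1 - 1 / 4) * (M i : ℝ) ^ ((1 : ℝ) / 4)) :=
          sum_Icc_prod_log_div_rpow_le M i (by norm_num) (by norm_num)
      _ ≤ (∏ j, (1 + (c j : ℝ)) ^ 2 * (N : ℝ) ^ α j * Real.log N)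
            / ((1 - 1 / 4) * (N : ℝ) ^ (δ / 4)) := by
          refine div_le_div₀ (by positivity) (prod_le_prod (fun j _ => ?_) fun j _ => ?_)
            (by positivity) (by gcongr; exact hM_ge i)
          · exact mul_nonneg (Nat.cast_nonneg _) (Real.log_natCast_nonneg _)
          · exact floor_rpow_add_mul_log_le hN (hα0.trans_le (hδ_le j)).le (hα_le_one j) (c j)
      _ = _ := by
          rw [prod_mul_distrib, prod_mul_distrib, ← Real.rpow_sum_of_pos hNpos, prod_const,
            card_univ, Fintype.card_fin, Real.rpow_sub hNpos]
          field_simp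
          ring
  calc _ ≤ ∑ d ∈ Icc 1 M, ∑ i, (∏ j, Real.log (d j)) / (d i : ℝ) ^ ((1 : ℝ) / 4) :=
        sum_le_sum fun d _ => univ.apply_inf'_le_sum _ d
          (φ := fun m : ℕ => (∏ j, Real.log (d j)) / (m : ℝ) ^ ((1 : ℝ) / 4)) fun _ =>
            div_nonneg (prod_nonneg fun j _ => Real.log_natCast_nonneg _) (by positivity)
    _ = ∑ i, ∑ d ∈ Icc 1 M, (∏ j, Real.log (d j)) / (d i : ℝ) ^ ((1 : ℝ) / 4) := sum_comm
    _ ≤ ∑ _i : Fin k, 4 / 3 * (∏ j, (1 + (c j : ℝ)) ^ 2) * (N : ℝ) ^ ((∑ j, α j) - δ / 4)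
          * Real.log N ^ k := sum_le_sum fun i _ => hbox i
    _ = _ := by simp only [sum_const, card_univ, Fintype.card_fin, nsmul_eq_mul]; ring
end
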